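/- arXiv:2202.03248 — 2 statements merged into one kernel-verified Lean document; each statement's English description precedes it below -/
import Mathlib

section
/- Let γ ≥ 0 and let A, B ≥ 0 be real constants. Then the semilinear equation F = γ·(A − B − F)⁺ has the unique solution F = (γ/(1+γ))·(A − B)⁺, and this solution is nonnegative. -/
/-- The FVA semilinear equation `F = γ·(A − B − F)⁺` has unique solution
`F = (γ/(1+γ))·(A − B)⁺`, which is nonnegative. -/
theorem stmt_2 (γ A B : ℝ) (hγ : 0 ≤ γ) (hA : 0 ≤ A) (hB : 0 ≤ B) :
    (∀ F : ℝ, F = γ * max (A - B - F) 0 ↔ F = γ / (1 + γ) * max (A - B) 0) ∧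
      0 ≤ γ / (1 + γ) * max (A - B) 0 := by
  have h1 : (0:ℝ) < 1 + γ := by linarith
  constructor
  · intro F
    rcases le_or_gt (A - B) 0 with hle | hgt
    · rw [max_eq_right hle]
      constructor
      · intro hF
        have hF0 : 0 ≤ F := hF ▸ mul_nonneg hγ (le_max_right _ _)
        have : max (A - B - F) 0 = 0 := max_eq_right (by linarith)
        rw [this, mul_zero] at hF
        simp [hF]
      · intro hF
        have hF0 : F = 0 := by simpa using hF
        rw [hF0, max_eq_right (by linarith), mul_zero]
    · rw [max_eq_left hgt.le]
      constructor
      · intro hF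
        have hF0 : 0 ≤ F := hF ▸ mul_nonneg hγ (le_max_right _ _)
        rcases le_or_gt (A - B - F) 0 with h2 | h2
        · rw [max_eq_right h2, mul_zero] at hF
          exfalso; rw [hF] at h2; linarith
        · rw [max_eq_left h2.le] at hF
          field_simp
          linarith
      · intro hF
        have hmax : max (A - B - F) 0 = A - B - F := by
          apply max_eq_left
          rw [hF]
          rw [div_mul_eq_mul_div, sub_nonneg, div_le_iff₀ h1]
          nlinarith
        rw [hmax, hF]
        field_simp
        ring
  · exact mul_nonneg (div_nonneg hγ h1.le) (le_max_right _ _)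
end

section
/- Suppose the clearing condition Σ_{i∈I}(P_i + P°_i) = 0 holds, where for each clearing member i, J_i ∈ {0,1} is its survival indicator, P_i and P°_i are its promised cash flows on the client and house accounts, MtM_i, PIM_i, VM_i, IM_i its variation and initial margins, and DFC_i ≥ 0 its default fund contribution. Then the total cash flow received by the CCP, namely Σ_i [ J_i(P_i + P°_i) + (1−J_i)( P_i ∧ (MtM_i + PIM_i) + P°_i ∧ (VM_i + IM_i) + ((P_i − MtM_i − PIM_i)⁺ + (P°_i − VM_i − IM_i)⁺) ∧ DFC_i ) ], equals −H, where H = Σ_i (1−J_i)·( (P_i − MtM_i − PIM_i)⁺ + (P°_i − VM_i − IM_i)⁺ − DFC_i )⁺. -/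
open Finset

/-! Member by member, what the CCP receives plus what it loses is exactly the promised flow
`P i + P' i`: a defaulter's collateral covers `x ∧ c` of each claim `x`, and the uncovered
part `(x - c)⁺` is exactly what the next layer (the default fund, then the survivors) has to
absorb, because `x ∧ c + (x - c)⁺ = x`. Summing and using the clearing condition gives `-H`. -/

section LinearOrderedAddCommGroup

variable {α : Type*} [AddCommGroup α] [LinearOrder α] [IsOrderedAddMonoid α]

theorem min_add_max_sub_zero (x c : α) : min x c + max (x - c) 0 = x := by
  rcases le_total x c with h | h
  · rw [min_eq_left h, max_eq_right (sub_nonpos.mpr h), add_zero]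
  · rw [min_eq_right h, max_eq_left (sub_nonneg.mpr h), add_sub_cancel]

end LinearOrderedAddCommGroup

theorem defaulter_payment_add_loss (P P' MtM VM PIM IM DFC : ℝ) :
    (min P (MtM + PIM) + min P' (VM + IM) +
        min (max (P - MtM - PIM) 0 + max (P' - VM - IM) 0) DFC) +
      max (max (P - MtM - PIM) 0 + max (P' - VM - IM) 0 - DFC) 0 = P + P' := by
  rw [add_assoc _ (min _ DFC), min_add_max_sub_zero, sub_sub, sub_sub, add_add_add_comm,
    min_add_max_sub_zero, min_add_max_sub_zero]

theorem member_cash_flow_add_loss (J Q X L : ℝ) (h : X + L = Q) :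
    (J * Q + (1 - J) * X) + (1 - J) * L = Q := by
  linear_combination (1 - J) * h

theorem stmt_5_general {I : Type*} [Fintype I]
    (J P P' MtM VM PIM IM DFC : I → ℝ)
    (hclear : ∑ i, (P i + P' i) = 0) :
    ∑ i, (J i * (P i + P' i) +
        (1 - J i) * (min (P i) (MtM i + PIM i) + min (P' i) (VM i + IM i) +
          min (max (P i - MtM i - PIM i) 0 + max (P' i - VM i - IM i) 0) (DFC i)))
      = -(∑ i, (1 - J i) *
          max (max (P i - MtM i - PIM i) 0 + max (P' i - VM i - IM i) 0 - DFC i) 0) := by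
  have hsum := Finset.sum_congr rfl fun i (_ : i ∈ univ) =>
    member_cash_flow_add_loss (J i) (P i + P' i) _ _
      (defaulter_payment_add_loss (P i) (P' i) (MtM i) (VM i) (PIM i) (IM i) (DFC i))
  rw [sum_add_distrib, hclear] at hsum
  linarith

/-- Under the CCP clearing condition, the total cash flow received by the CCP
equals minus the CCP loss `H` borne by survivors. -/
theorem stmt_5 {I : Type*} [Fintype I]
    (J P P' MtM VM PIM IM DFC : I → ℝ)
    (hJ : ∀ i, J i = 0 ∨ J i = 1)
    (hPIM : ∀ i, 0 ≤ PIM i) (hIM : ∀ i, 0 ≤ IM i) (hDFC : ∀ i, 0 ≤ DFC i)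
    (hclear : ∑ i, (P i + P' i) = 0) :
    ∑ i, (J i * (P i + P' i) +
        (1 - J i) * (min (P i) (MtM i + PIM i) + min (P' i) (VM i + IM i) +
          min (max (P i - MtM i - PIM i) 0 + max (P' i - VM i - IM i) 0) (DFC i)))
      = -(∑ i, (1 - J i) *
          max (max (P i - MtM i - PIM i) 0 + max (P' i - VM i - IM i) 0 - DFC i) 0) :=
  stmt_5_general J P P' MtM VM PIM IM DFC hclear
end
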